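/- For any strict liveness formula ψ_SL and state q of an MDP M, if q satisfies ψ_SL, then there exists k ∈ ℕ such that the k-th unrolling M_k^q of M rooted at q satisfies ψ_SL. Consequently, if a weak safety formula ψ_WS is violated by an MDP M, there is an MDP M' whose underlying unlabeled graph is a tree, M' ≼ M, and M' violates ψ_WS. -/

import Mathlib

open Classical
attribute [local instance 10] Classical.propDecidable

noncomputable section

universe u v w

/-- A sub-probability measure on a finite set `Q`. -/
structure SubProb (Q : Type u) [Fintype Q] where
  val : Q → ℝ
  nonneg : ∀ q, 0 ≤ val q
  sum_le_one : ∑ q, val q ≤ 1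

namespace SubProb

variable {Q : Type u} {Q' : Type v} [Fintype Q] [Fintype Q']

/-- The measure of a set of states. -/
def mass (μ : SubProb Q) (A : Set Q) : ℝ := ∑ q, A.indicator μ.val q

/-- The zero sub-probability measure. -/
def zero (Q : Type u) [Fintype Q] : SubProb Q :=
  ⟨fun _ => 0, fun _ => le_refl 0, by simp⟩

/-- Extension (by zero) of a sub-probability measure to a disjoint sum (left). -/
def toLeft (μ : SubProb Q) : SubProb (Q ⊕ Q') where
  val := Sum.elim μ.val fun _ => 0
  nonneg := by rintro (q | q); exacts [μ.nonneg q, le_refl 0]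
  sum_le_one := by simpa [Fintype.sum_sum_type] using μ.sum_le_one

/-- Extension (by zero) of a sub-probability measure to a disjoint sum (right). -/
def toRight (μ : SubProb Q') : SubProb (Q ⊕ Q') where
  val := Sum.elim (fun _ => 0) μ.val
  nonneg := by rintro (q | q); exacts [le_refl 0, μ.nonneg q]
  sum_le_one := by simpa [Fintype.sum_sum_type] using μ.sum_le_one

end SubProb

/-- The image of a set under a binary relation. -/
def relImage {A : Type u} {B : Type v} (R : A → B → Prop) (S : Set A) : Set B :=
  {b | ∃ a ∈ S, R a b}

/-- A set is `R`-closed if its image under `R` is itself. -/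
def RClosed {Q : Type u} (R : Q → Q → Prop) (A : Set Q) : Prop := relImage R A = A

/-- `μ ≼_R μ'` : `μ'` simulates `μ` with respect to `R`. -/
def SubProb.simLE {Q : Type u} [Fintype Q] (R : Q → Q → Prop) (μ μ' : SubProb Q) : Prop :=
  ∀ A : Set Q, RClosed R A → μ.mass A ≤ μ'.mass A

/-- `μ ≈_R μ'` : `μ` is equivalent to `μ'` with respect to `R`. -/
def SubProb.simEq {Q : Type u} [Fintype Q] (R : Q → Q → Prop) (μ μ' : SubProb Q) : Prop :=
  ∀ A : Set Q, RClosed R A → μ.mass A = μ'.mass A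

/-- A (finite) Markov decision process over atomic propositions `AP`. -/
structure MDP (Q : Type u) [Fintype Q] (AP : Type w) where
  init : Q
  trans : Q → Finset (SubProb Q)
  trans_nonempty : ∀ q, (trans q).Nonempty
  label : Q → Set AP

variable {Q : Type u} {Q' : Type v} {AP : Type w} [Fintype Q] [Fintype Q']

/-- A simulation relation on (the state space of) an MDP: a preorder such that related
states have the same labels and every transition of the smaller state is simulated. -/
def IsSimulation (M : MDP Q AP) (R : Q → Q → Prop) : Prop :=
  Reflexive R ∧ Transitive R ∧
    ∀ q q', R q q' → M.label q = M.label q' ∧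
      ∀ μ ∈ M.trans q, ∃ μ' ∈ M.trans q', SubProb.simLE R μ μ'

/-- A bisimulation on (the state space of) an MDP. -/
def IsBisimulation (M : MDP Q AP) (R : Q → Q → Prop) : Prop :=
  Equivalence R ∧
    ∀ q q', R q q' → M.label q = M.label q' ∧
      ∀ μ ∈ M.trans q, ∃ μ' ∈ M.trans q', SubProb.simEq R μ μ'

/-- The direct sum of two MDPs (with the initial state of the first as initial state). -/
def MDP.dsum (M : MDP Q AP) (M' : MDP Q' AP) : MDP (Q ⊕ Q') AP where
  init := Sum.inl M.init
  trans := fun x =>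
    match x with
    | .inl q => (M.trans q).image SubProb.toLeft
    | .inr q => (M'.trans q).image SubProb.toRight
  trans_nonempty := by
    rintro (q | q)
    · exact (M.trans_nonempty q).image _
    · exact (M'.trans_nonempty q).image _
  label := Sum.elim M.label M'.label

/-- `M ≼ M'` : the MDP `M'` simulates the MDP `M`. -/
def MDP.Sim (M : MDP Q AP) (M' : MDP Q' AP) : Prop :=
  ∃ R : (Q ⊕ Q') → (Q ⊕ Q') → Prop,
    IsSimulation (M.dsum M') R ∧ R (Sum.inl M.init) (Sum.inr M'.init)

/-- `M ≈ M'` : the MDPs `M` and `M'` are bisimilar. -/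
def MDP.Bisim (M : MDP Q AP) (M' : MDP Q' AP) : Prop :=
  ∃ R : (Q ⊕ Q') → (Q ⊕ Q') → Prop,
    IsBisimulation (M.dsum M') R ∧ R (Sum.inl M.init) (Sum.inr M'.init)

/-- The canonical-form relation `id_Q ∪ R₁ ∪ id_{Q'}` on a disjoint sum. -/
def canonRel (R₁ : Q → Q' → Prop) : (Q ⊕ Q') → (Q ⊕ Q') → Prop
  | .inl a, .inl b => a = b
  | .inl a, .inr b => R₁ a b
  | .inr _, .inl _ => False
  | .inr a, .inr b => a = b

/-- `R₁ ⊆ Q × Q'` is a canonical simulation of `M` by `M'`. -/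
def IsCanonSim (M : MDP Q AP) (M' : MDP Q' AP) (R₁ : Q → Q' → Prop) : Prop :=
  IsSimulation (M.dsum M') (canonRel R₁)

/-- The edge relation of the unlabeled underlying graph of an MDP. -/
def MDP.edge (M : MDP Q AP) (q₁ q₂ : Q) : Prop :=
  ∃ μ ∈ M.trans q₁, 0 < μ.val q₂

/-- A sub-probability measure on `Q` viewed as a measure on `Q × Fin (k+1)`
concentrated on level `j`. -/
def SubProb.toLevel {k : ℕ} (μ : SubProb Q) (j : Fin (k + 1)) : SubProb (Q × Fin (k + 1)) where
  val := fun x => if x.2 = j then μ.val x.1 else 0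
  nonneg := by
    intro x; (try dsimp only); split
    · exact μ.nonneg x.1
    · exact le_refl 0
  sum_le_one := by
    rw [Fintype.sum_prod_type]
    simpa using μ.sum_le_one

/-- The `k`-th unrolling of an MDP rooted at `q`. States at level `j+1` transition to the
corresponding states at level `j`; states at level `0` have only the zero transition. -/
def MDP.unroll (M : MDP Q AP) (q : Q) (k : ℕ) : MDP (Q × Fin (k + 1)) AP where
  init := (q, Fin.last k)
  trans := fun x =>
    if h : (x.2 : ℕ) = 0 then {SubProb.zero _}
    else (M.trans x.1).image fun μ =>
      μ.toLevel ⟨(x.2 : ℕ) - 1, Nat.lt_of_le_of_lt (Nat.sub_le _ _) x.2.isLt⟩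
  trans_nonempty := by
    intro x; (try dsimp only); split
    · simp
    · exact (M.trans_nonempty x.1).image _
  label := fun x => M.label x.1
mutual
/-- The safety fragment of PCTL. -/
inductive SafeF (AP : Type w) : Type w
  | tt : SafeF AP
  | ff : SafeF AP
  | atom : AP → SafeF AP
  | natom : AP → SafeF AP
  | and : SafeF AP → SafeF AP → SafeF AP
  | or : SafeF AP → SafeF AP → SafeF AP
  | pnextLt : (p : ℚ) → 0 ≤ p → p ≤ 1 → LiveF AP → SafeF AP
  | pnextLe : (p : ℚ) → 0 ≤ p → p ≤ 1 → LiveF AP → SafeF AP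
  | puntilLt : (p : ℚ) → 0 ≤ p → p ≤ 1 → LiveF AP → LiveF AP → SafeF AP
  | puntilLe : (p : ℚ) → 0 ≤ p → p ≤ 1 → LiveF AP → LiveF AP → SafeF AP

/-- The liveness fragment of PCTL. -/
inductive LiveF (AP : Type w) : Type w
  | tt : LiveF AP
  | ff : LiveF AP
  | atom : AP → LiveF AP
  | natom : AP → LiveF AP
  | and : LiveF AP → LiveF AP → LiveF AP
  | or : LiveF AP → LiveF AP → LiveF AP
  | nnextLt : (p : ℚ) → 0 ≤ p → p ≤ 1 → LiveF AP → LiveF AP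
  | nnextLe : (p : ℚ) → 0 ≤ p → p ≤ 1 → LiveF AP → LiveF AP
  | nuntilLt : (p : ℚ) → 0 ≤ p → p ≤ 1 → LiveF AP → LiveF AP → LiveF AP
  | nuntilLe : (p : ℚ) → 0 ≤ p → p ≤ 1 → LiveF AP → LiveF AP → LiveF AP
end

/-- A (history-dependent) scheduler for an MDP. -/
structure Sched (M : MDP Q AP) where
  choice : List Q → Q → SubProb Q
  valid : ∀ h q, choice h q ∈ M.trans q

/-- The probability, under scheduler `σ` with current history `h`, that an until property
`s1 U s2` is satisfied from `q` within `n` steps. -/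
def untilProbN (M : MDP Q AP) (σ : Sched M) (s1 s2 : Set Q) : ℕ → List Q → Q → ℝ
  | 0, _, q => if q ∈ s2 then 1 else 0
  | n + 1, h, q =>
    if q ∈ s2 then 1
    else if q ∈ s1 then
      ∑ q', (σ.choice h q).val q' * untilProbN M σ s1 s2 n (h ++ [q]) q'
    else 0

/-- The probability under scheduler `σ` that `s1 U s2` is satisfied from `q`. -/
def untilProb (M : MDP Q AP) (σ : Sched M) (s1 s2 : Set Q) (q : Q) : ℝ :=
  ⨆ n : ℕ, untilProbN M σ s1 s2 n [] q

mutual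
/-- Satisfaction of safety formulas at a state of an MDP (under all schedulers). -/
def satS (M : MDP Q AP) : SafeF AP → Q → Prop
  | .tt, _ => True
  | .ff, _ => False
  | .atom a, q => a ∈ M.label q
  | .natom a, q => a ∉ M.label q
  | .and φ ψ, q => satS M φ q ∧ satS M ψ q
  | .or φ ψ, q => satS M φ q ∨ satS M ψ q
  | .pnextLt p _ _ ψ, q => ∀ μ ∈ M.trans q, μ.mass {q' | satL M ψ q'} < (p : ℝ)
  | .pnextLe p _ _ ψ, q => ∀ μ ∈ M.trans q, μ.mass {q' | satL M ψ q'} ≤ (p : ℝ)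
  | .puntilLt p _ _ ψ1 ψ2, q =>
    ∀ σ : Sched M, untilProb M σ {q' | satL M ψ1 q'} {q' | satL M ψ2 q'} q < (p : ℝ)
  | .puntilLe p _ _ ψ1 ψ2, q =>
    ∀ σ : Sched M, untilProb M σ {q' | satL M ψ1 q'} {q' | satL M ψ2 q'} q ≤ (p : ℝ)

/-- Satisfaction of liveness formulas at a state of an MDP. -/
def satL (M : MDP Q AP) : LiveF AP → Q → Prop
  | .tt, _ => True
  | .ff, _ => False
  | .atom a, q => a ∈ M.label q
  | .natom a, q => a ∉ M.label q
  | .and φ ψ, q => satL M φ q ∧ satL M ψ q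
  | .or φ ψ, q => satL M φ q ∨ satL M ψ q
  | .nnextLt p _ _ ψ, q => ¬ ∀ μ ∈ M.trans q, μ.mass {q' | satL M ψ q'} < (p : ℝ)
  | .nnextLe p _ _ ψ, q => ¬ ∀ μ ∈ M.trans q, μ.mass {q' | satL M ψ q'} ≤ (p : ℝ)
  | .nuntilLt p _ _ ψ1 ψ2, q =>
    ¬ ∀ σ : Sched M, untilProb M σ {q' | satL M ψ1 q'} {q' | satL M ψ2 q'} q < (p : ℝ)
  | .nuntilLe p _ _ ψ1 ψ2, q =>
    ¬ ∀ σ : Sched M, untilProb M σ {q' | satL M ψ1 q'} {q' | satL M ψ2 q'} q ≤ (p : ℝ)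
end
mutual
/-- Weak safety formulas: safety formulas using only `≤` probability bounds. -/
def SafeF.weak : SafeF AP → Prop
  | .tt => True
  | .ff => True
  | .atom _ => True
  | .natom _ => True
  | .and φ ψ => φ.weak ∧ ψ.weak
  | .or φ ψ => φ.weak ∧ ψ.weak
  | .pnextLt _ _ _ _ => False
  | .pnextLe _ _ _ ψ => ψ.strict
  | .puntilLt _ _ _ _ _ => False
  | .puntilLe _ _ _ ψ1 ψ2 => ψ1.strict ∧ ψ2.strict

/-- Strict liveness formulas: liveness formulas using only `≤` probability bounds. -/
def LiveF.strict : LiveF AP → Prop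
  | .tt => True
  | .ff => True
  | .atom _ => True
  | .natom _ => True
  | .and φ ψ => φ.strict ∧ ψ.strict
  | .or φ ψ => φ.strict ∧ ψ.strict
  | .nnextLt _ _ _ _ => False
  | .nnextLe _ _ _ ψ => ψ.strict
  | .nuntilLt _ _ _ _ _ => False
  | .nuntilLe _ _ _ ψ1 ψ2 => ψ1.strict ∧ ψ2.strict
end

/-- An equivalence relation is compatible with an MDP if related states have equal labels. -/
def Compatible (M : MDP Q AP) (s : Setoid Q) : Prop :=
  ∀ q q', s.r q q' → M.label q = M.label q'

/-- The lifting of a sub-probability measure to the quotient: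
`[μ]([q]) = μ([q])`. -/
def SubProb.lift (s : Setoid Q) (μ : SubProb Q) : SubProb (Quotient s) where
  val := fun a => ∑ q, if Quotient.mk s q = a then μ.val q else 0
  nonneg := by
    intro a
    apply Finset.sum_nonneg
    intro q _
    split
    · exact μ.nonneg q
    · exact le_refl 0
  sum_le_one := by
    rw [Finset.sum_comm]
    simpa using μ.sum_le_one

/-- The abstract MDP of `M` with respect to an equivalence relation `s`. -/
def MDP.abst (M : MDP Q AP) (s : Setoid Q) : MDP (Quotient s) AP where
  init := Quotient.mk s M.init
  trans := fun a =>
    Finset.univ.biUnion fun q =>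
      if Quotient.mk s q = a then (M.trans q).image (SubProb.lift s) else ∅
  trans_nonempty := by
    intro a
    obtain ⟨q, rfl⟩ := Quotient.exists_rep a
    obtain ⟨μ, hμ⟩ := M.trans_nonempty q
    refine ⟨SubProb.lift s μ, Finset.mem_biUnion.2 ⟨q, Finset.mem_univ q, ?_⟩⟩
    rw [if_pos rfl]
    exact Finset.mem_image_of_mem _ hμ
  label := fun a => M.label a.out

/-- The abstraction relation `{(q, [q])}`. -/
def abstRel (s : Setoid Q) : Q → Quotient s → Prop := fun q a => Quotient.mk s q = a

/-- The refinement relation for `s' ⊆ s`: `[q]_{s'}` is related to `[q]_s` iff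
`[q]_{s'} ⊆ [q]_s`, equivalently they share a common element. -/
def refineRel (s' s : Setoid Q) : Quotient s' → Quotient s → Prop := fun a' a =>
  ∃ q : Q, Quotient.mk s' q = a' ∧ Quotient.mk s q = a

/-- `(E, R)` is a counterexample for the MDP `A` and safety formula `ψ`. -/
def IsCex {QA : Type v} [Fintype QA] (A : MDP QA AP) (ψ : SafeF AP) (E : MDP Q AP)
    (R : Q → QA → Prop) : Prop :=
  ¬ satS E ψ E.init ∧ IsCanonSim E A R

/-- Containment of MDPs (on a common state space): same initial state, same labels, and
each transition set injects into the corresponding one so that each transition agrees with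
its image except possibly being zero. -/
def MDPContained (M' M : MDP Q AP) : Prop :=
  M'.init = M.init ∧ (∀ q, M'.label q = M.label q) ∧
    ∀ q, ∃ f : SubProb Q → SubProb Q, Set.InjOn f (M'.trans q) ∧
      ∀ μ' ∈ M'.trans q, f μ' ∈ M.trans q ∧ ∀ q'', μ'.val q'' = (f μ').val q'' ∨ μ'.val q'' = 0

/-- A minimal counterexample. -/
def MinimalCex {QA : Type v} [Fintype QA] (A : MDP QA AP) (ψ : SafeF AP) (E : MDP Q AP)
    (R₀ : Q → QA → Prop) : Prop :=
  IsCex A ψ E R₀ ∧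
    (∀ (E₁ : MDP Q AP) (R₁ : Q → QA → Prop),
      IsCex A ψ E₁ R₁ → MDPContained E₁ E → E₁ = E) ∧
    (∀ R₁ : Q → QA → Prop,
      IsCex A ψ E R₁ → (∀ e a, R₁ e a → R₀ e a) → R₁ = R₀)

/-- The counterexample `(E, R₀)` for the abstraction `M/s` is valid and consistent with
`(M, s)`: there is a canonical (validating) simulation `R` of `E` by `M` with `α∘R ⊆ R₀`. -/
def ValidConsistent (M : MDP Q AP) (s : Setoid Q) {QE : Type v} [Fintype QE] (E : MDP QE AP)
    (R₀ : QE → Quotient s → Prop) : Prop :=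
  ∃ R : QE → Q → Prop, IsCanonSim E M R ∧ ∀ e q, R e q → R₀ e (Quotient.mk s q)

/-- The underlying graph of an MDP is a tree rooted at `r`. -/
def IsTreeGraph {V : Type u} (E : V → V → Prop) (r : V) : Prop :=
  (∀ q, ¬ E q r) ∧ (∀ q, q ≠ r → ∃! p, E p q) ∧ ∀ q, Relation.ReflTransGen E r q

/-!
A strict liveness formula only asserts strict lower bounds `p < ·` on probabilities. An until
probability is the supremum of its finite-horizon approximations, so such a bound is already
exceeded after finitely many steps, and as `M` has finitely many states, satisfaction of the whole
formula is witnessed within one finite depth `n`. A witness of depth `n` survives in any MDP that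
mimics `M` for `n` steps, such as the `n`-th unrolling or the tree of paths of length at most `n`.
A weak safety formula is the negation of a strict liveness formula, and the tree of paths is
simulated by `M` through the map sending a path to its endpoint.
-/

section Sums

variable {α β : Type*} [Fintype α] [Fintype β] {f : α → ℝ} {g : β → ℝ}

theorem sum_le_sum_of_exists_preimage (hg : ∀ b, 0 ≤ g b) (π : β → α)
    (h : ∀ a, f a ≠ 0 → ∃ b, π b = a ∧ f a ≤ g b) : ∑ a, f a ≤ ∑ b, g b := by
  rw [← Finset.sum_fiberwise Finset.univ π g]
  refine Finset.sum_le_sum fun a _ => ?_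
  by_cases ha : f a = 0
  · rw [ha]
    exact Finset.sum_nonneg fun b _ => hg b
  · obtain ⟨b, rfl, hb⟩ := h a ha
    exact hb.trans (Finset.single_le_sum (fun b _ => hg b) (by simp))

theorem sum_le_sum_of_injOn_support (hg : ∀ b, 0 ≤ g b) (e : α → β)
    (he : Set.InjOn e (Function.support f)) (h : ∀ a, f a ≠ 0 → f a ≤ g (e a)) :
    ∑ a, f a ≤ ∑ b, g b := by
  set s := Finset.univ.filter (f · ≠ 0)
  calc ∑ a, f a = ∑ a ∈ s, f a := (Finset.sum_filter_ne_zero _).symm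
    _ ≤ ∑ a ∈ s, g (e a) := Finset.sum_le_sum fun a ha => h a (Finset.mem_filter.1 ha).2
    _ = ∑ b ∈ s.image e, g b :=
      (Finset.sum_image fun a ha a' ha' => he (by simpa [s] using ha) (by simpa [s] using ha')).symm
    _ ≤ ∑ b, g b := Finset.sum_le_sum_of_subset_of_nonneg (Finset.subset_univ _) fun b _ _ => hg b

end Sums

namespace SubProb

theorem mass_nonneg (μ : SubProb Q) (A : Set Q) : 0 ≤ μ.mass A :=
  Finset.sum_nonneg fun q _ => Set.indicator_nonneg (fun q _ => μ.nonneg q) q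

theorem mass_mono (μ : SubProb Q) {A B : Set Q} (h : A ⊆ B) : μ.mass A ≤ μ.mass B :=
  Finset.sum_le_sum fun q _ => Set.indicator_le_indicator_of_subset h μ.nonneg q

theorem mass_le_mass_of_exists_preimage {μ : SubProb Q} {ν : SubProb Q'} {A : Set Q}
    {B : Set Q'} (π : Q' → Q) (h : ∀ q ∈ A, μ.val q ≠ 0 → ∃ y ∈ B, π y = q ∧ μ.val q ≤ ν.val y) :
    μ.mass A ≤ ν.mass B := by
  refine sum_le_sum_of_exists_preimage (Set.indicator_nonneg fun y _ => ν.nonneg y) π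
    fun q hq => ?_
  have hqA : q ∈ A := Set.mem_of_indicator_ne_zero hq
  obtain ⟨y, hyB, rfl, hle⟩ := h _ hqA (by rwa [Set.indicator_of_mem hqA] at hq)
  exact ⟨y, rfl, by rwa [Set.indicator_of_mem hqA, Set.indicator_of_mem hyB]⟩

@[simp]
theorem mass_zero (A : Set Q) : (SubProb.zero Q).mass A = 0 := by
  simp [mass, SubProb.zero]

@[simp]
theorem mass_toLeft (μ : SubProb Q) (A : Set (Q ⊕ Q')) :
    (μ.toLeft : SubProb (Q ⊕ Q')).mass A = μ.mass {a | Sum.inl a ∈ A} := by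
  simp [mass, toLeft, Fintype.sum_sum_type, Set.indicator_apply]

@[simp]
theorem mass_toRight (μ : SubProb Q') (A : Set (Q ⊕ Q')) :
    (μ.toRight : SubProb (Q ⊕ Q')).mass A = μ.mass {b | Sum.inr b ∈ A} := by
  simp [mass, toRight, Fintype.sum_sum_type, Set.indicator_apply]

end SubProb

section UntilProb

variable {M : MDP Q AP} (σ : Sched M) (s1 s2 : Set Q)

theorem untilProbN_nonneg : ∀ n h q, 0 ≤ untilProbN M σ s1 s2 n h q
  | 0, h, q => by rw [untilProbN]; split_ifs <;> norm_num
  | n + 1, h, q => by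
    rw [untilProbN]
    split_ifs
    · exact zero_le_one
    · exact Finset.sum_nonneg fun q' _ =>
        mul_nonneg ((σ.choice h q).nonneg q') (untilProbN_nonneg n _ q')
    · exact le_rfl

theorem untilProbN_le_one : ∀ n h q, untilProbN M σ s1 s2 n h q ≤ 1
  | 0, h, q => by rw [untilProbN]; split_ifs <;> norm_num
  | n + 1, h, q => by
    rw [untilProbN]
    split_ifs
    · exact le_rfl
    · calc ∑ q', (σ.choice h q).val q' * untilProbN M σ s1 s2 n (h ++ [q]) q'
          ≤ ∑ q', (σ.choice h q).val q' := Finset.sum_le_sum fun q' _ =>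
            mul_le_of_le_one_right ((σ.choice h q).nonneg q') (untilProbN_le_one n _ q')
        _ ≤ 1 := (σ.choice h q).sum_le_one
    · exact zero_le_one

theorem bddAbove_range_untilProbN (q : Q) :
    BddAbove (Set.range fun n => untilProbN M σ s1 s2 n [] q) :=
  ⟨1, by rintro _ ⟨n, rfl⟩; exact untilProbN_le_one σ s1 s2 n [] q⟩

theorem untilProbN_le_untilProb (n : ℕ) (q : Q) :
    untilProbN M σ s1 s2 n [] q ≤ untilProb M σ s1 s2 q :=
  le_ciSup (bddAbove_range_untilProbN σ s1 s2 q) n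

theorem exists_lt_untilProbN {c : ℝ} {q : Q} (h : c < untilProb M σ s1 s2 q) :
    ∃ n, c < untilProbN M σ s1 s2 n [] q :=
  exists_lt_of_lt_ciSup h

end UntilProb

theorem untilProbN_le_untilProbN_of_forall {M : MDP Q AP} {N : MDP Q' AP} (σ : Sched M)
    (τ : Sched N) (π : Q' → Q) {s1 s2 : Set Q} {t1 t2 : Set Q'} (I : ℕ → Q' → Prop)
    (h1 : ∀ n y, I n y → π y ∈ s1 → y ∈ t1) (h2 : ∀ n y, I n y → π y ∈ s2 → y ∈ t2)
    (hstep : ∀ n y hist, I (n + 1) y → ∀ q, (σ.choice (hist.map π) (π y)).val q ≠ 0 →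
      ∃ y', π y' = q ∧ I n y' ∧
        (σ.choice (hist.map π) (π y)).val q ≤ (τ.choice hist y).val y') :
    ∀ n hist y, I n y →
      untilProbN M σ s1 s2 n (hist.map π) (π y) ≤ untilProbN N τ t1 t2 n hist y := by
  intro n
  induction n with
  | zero =>
    intro hist y hI
    rw [untilProbN, untilProbN]
    by_cases hs2 : π y ∈ s2
    · rw [if_pos hs2, if_pos (h2 0 y hI hs2)]
    · rw [if_neg hs2]
      exact untilProbN_nonneg τ t1 t2 0 hist y
  | succ n ih =>
    intro hist y hI
    by_cases ht2 : y ∈ t2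
    · rw [show untilProbN N τ t1 t2 (n + 1) hist y = 1 by rw [untilProbN, if_pos ht2]]
      exact untilProbN_le_one σ s1 s2 _ _ _
    have hs2 : π y ∉ s2 := fun hs2 => ht2 (h2 _ y hI hs2)
    by_cases hs1 : π y ∈ s1
    · rw [untilProbN, untilProbN, if_neg hs2, if_pos hs1, if_neg ht2, if_pos (h1 _ y hI hs1)]
      refine sum_le_sum_of_exists_preimage
        (fun y' => mul_nonneg ((τ.choice hist y).nonneg y') (untilProbN_nonneg τ _ _ _ _ _)) π
        fun q hq => ?_
      obtain ⟨y', rfl, hI', hle⟩ := hstep n y hist hI q (left_ne_zero_of_mul hq)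
      have hIH := ih (hist ++ [y]) y' hI'
      rw [List.map_append, List.map_singleton] at hIH
      exact ⟨y', rfl,
        mul_le_mul hle hIH (untilProbN_nonneg σ _ _ _ _ _) ((τ.choice hist y).nonneg y')⟩
    · rw [untilProbN, if_neg hs2, if_neg hs1]
      exact untilProbN_nonneg τ t1 t2 _ hist y

theorem untilProbN_mono {M : MDP Q AP} (σ : Sched M) {s1 s2 t1 t2 : Set Q} (h1 : s1 ⊆ t1)
    (h2 : s2 ⊆ t2) (n : ℕ) (q : Q) :
    untilProbN M σ s1 s2 n [] q ≤ untilProbN M σ t1 t2 n [] q :=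
  untilProbN_le_untilProbN_of_forall σ σ id (fun _ _ => True) (fun _ _ _ h => h1 h)
    (fun _ _ _ h => h2 h) (fun _ _ hist _ q _ => ⟨q, rfl, trivial, by rw [List.map_id]; rfl⟩)
    n [] q trivial

/-- `satL` witnessed within `n` steps. Only the strict fragment is covered: the `<` operators
are `False`. -/
def satLWithin (M : MDP Q AP) : LiveF AP → ℕ → Q → Prop
  | .tt, _, _ => True
  | .ff, _, _ => False
  | .atom a, _, q => a ∈ M.label q
  | .natom a, _, q => a ∉ M.label q
  | .and φ ψ, n, q => satLWithin M φ n q ∧ satLWithin M ψ n q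
  | .or φ ψ, n, q => satLWithin M φ n q ∨ satLWithin M ψ n q
  | .nnextLt _ _ _ _, _, _ => False
  | .nnextLe p _ _ ψ, n, q =>
    ∃ m, m + 1 ≤ n ∧ ∃ μ ∈ M.trans q, (p : ℝ) < μ.mass {q' | satLWithin M ψ m q'}
  | .nuntilLt _ _ _ _ _, _, _ => False
  | .nuntilLe p _ _ ψ1 ψ2, n, q =>
    ∃ m k, m + k ≤ n ∧ ∃ σ : Sched M, (p : ℝ) <
      untilProbN M σ {q' | satLWithin M ψ1 k q'} {q' | satLWithin M ψ2 k q'} m [] q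

open Filter in
theorem eventually_satLWithin (M : MDP Q AP) :
    ∀ ψ : LiveF AP, ψ.strict → ∀ᶠ n in atTop, ∀ q, satL M ψ q → satLWithin M ψ n q
  | .tt, _ | .ff, _ | .atom _, _ | .natom _, _ => Eventually.of_forall fun _ _ h => h
  | .and φ ψ, hs => by
    filter_upwards [eventually_satLWithin M φ hs.1, eventually_satLWithin M ψ hs.2]
      with n hφ hψ q hq using ⟨hφ q hq.1, hψ q hq.2⟩
  | .or φ ψ, hs => by
    filter_upwards [eventually_satLWithin M φ hs.1, eventually_satLWithin M ψ hs.2]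
      with n hφ hψ q hq using hq.imp (hφ q) (hψ q)
  | .nnextLe p _ _ ψ, hs => by
    obtain ⟨m, hm⟩ := (eventually_satLWithin M ψ hs).exists
    filter_upwards [eventually_ge_atTop (m + 1)] with n hn q hq
    simp only [satL, not_forall, not_le, exists_prop] at hq
    obtain ⟨μ, hμ, hlt⟩ := hq
    exact ⟨m, hn, μ, hμ, hlt.trans_le (μ.mass_mono fun q' => hm q')⟩
  | .nuntilLe p h0 h1 ψ1 ψ2, hs => by
    obtain ⟨k, hk1, hk2⟩ :=
      ((eventually_satLWithin M ψ1 hs.1).and (eventually_satLWithin M ψ2 hs.2)).exists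
    refine eventually_all.2 fun q => ?_
    by_cases hq : satL M (.nuntilLe p h0 h1 ψ1 ψ2) q
    · simp only [satL, not_forall, not_le] at hq
      obtain ⟨σ, hσ⟩ := hq
      obtain ⟨m, hm⟩ := exists_lt_untilProbN σ _ _ hσ
      filter_upwards [eventually_ge_atTop (m + k)] with n hn _
      exact ⟨m, k, hn, σ,
        hm.trans_le (untilProbN_mono σ (fun q' => hk1 q') (fun q' => hk2 q') m q)⟩
    · exact Eventually.of_forall fun _ h => absurd h hq

/-- `N` mimics `M` along `proj` for `lvl x` more steps from `x`. -/
structure LevelCover (N : MDP Q' AP) (M : MDP Q AP) where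
  proj : Q' → Q
  lvl : Q' → ℕ
  label_eq : ∀ x, N.label x = M.label (proj x)
  lift : Q' → SubProb Q → SubProb Q'
  lift_mem : ∀ x, lvl x ≠ 0 → ∀ μ ∈ M.trans (proj x), lift x μ ∈ N.trans x
  exists_lift : ∀ x, lvl x ≠ 0 → ∀ μ ∈ M.trans (proj x), ∀ q, μ.val q ≠ 0 →
    ∃ y, proj y = q ∧ lvl x ≤ lvl y + 1 ∧ μ.val q ≤ (lift x μ).val y

namespace LevelCover

variable {M : MDP Q AP} {N : MDP Q' AP} (C : LevelCover N M)

def sched (σ : Sched M) : Sched N where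
  choice hist y :=
    if C.lvl y ≠ 0 then C.lift y (σ.choice (hist.map C.proj) (C.proj y))
    else (N.trans_nonempty y).choose
  valid hist y := by
    split_ifs with hy
    · exact C.lift_mem y hy _ (σ.valid _ _)
    · exact (N.trans_nonempty y).choose_spec

theorem sched_choice {σ : Sched M} {y : Q'} (hy : C.lvl y ≠ 0) (hist : List Q') :
    (C.sched σ).choice hist y = C.lift y (σ.choice (hist.map C.proj) (C.proj y)) :=
  if_pos hy

theorem satL_of_satLWithin :
    ∀ (ψ : LiveF AP) (n : ℕ) (x : Q'), n ≤ C.lvl x → satLWithin M ψ n (C.proj x) → satL N ψ x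
  | .tt, _, _, _, _ => trivial
  | .ff, _, _, _, h | .nnextLt _ _ _ _, _, _, _, h | .nuntilLt _ _ _ _ _, _, _, _, h => h.elim
  | .atom _, _, x, _, h | .natom _, _, x, _, h => by rwa [satL, C.label_eq]
  | .and φ ψ, n, x, hn, h =>
    ⟨satL_of_satLWithin φ n x hn h.1, satL_of_satLWithin ψ n x hn h.2⟩
  | .or φ ψ, n, x, hn, h =>
    h.imp (satL_of_satLWithin φ n x hn) (satL_of_satLWithin ψ n x hn)
  | .nnextLe p _ _ ψ, n, x, hn, ⟨m, hm, μ, hμ, hlt⟩ => by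
    have hx : C.lvl x ≠ 0 := by omega
    have hmass : μ.mass {q | satLWithin M ψ m q} ≤ (C.lift x μ).mass {y | satL N ψ y} := by
      refine SubProb.mass_le_mass_of_exists_preimage C.proj fun q hq hμq => ?_
      obtain ⟨y, rfl, hy, hle⟩ := C.exists_lift x hx μ hμ q hμq
      exact ⟨y, satL_of_satLWithin ψ m y (by omega) hq, rfl, hle⟩
    exact fun hall => (hlt.trans_le (hmass.trans (hall _ (C.lift_mem x hx μ hμ)))).false
  | .nuntilLe p _ _ ψ1 ψ2, n, x, hn, ⟨m, k, hmk, σ, hlt⟩ => by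
    have hcmp := untilProbN_le_untilProbN_of_forall σ (C.sched σ) C.proj
      (t1 := {y | satL N ψ1 y}) (t2 := {y | satL N ψ2 y}) (fun j y => j + k ≤ C.lvl y)
      (fun j y hy => satL_of_satLWithin ψ1 k y (by omega))
      (fun j y hy => satL_of_satLWithin ψ2 k y (by omega))
      (fun j y hist hy q hq => by
        have hy0 : C.lvl y ≠ 0 := by omega
        obtain ⟨y', rfl, hy', hle⟩ := C.exists_lift y hy0 _ (σ.valid _ _) q hq
        exact ⟨y', rfl, by omega, by rwa [C.sched_choice hy0]⟩)
      m [] x (by omega)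
    exact fun hall => (hlt.trans_le (hcmp.trans
      ((untilProbN_le_untilProb _ _ _ m x).trans (hall (C.sched σ))))).false

end LevelCover

def MDP.unrollCover (M : MDP Q AP) (q : Q) (k : ℕ) : LevelCover (M.unroll q k) M where
  proj x := x.1
  lvl x := x.2
  label_eq _ := rfl
  lift x μ := μ.toLevel ⟨x.2 - 1, by omega⟩
  lift_mem x hx μ hμ := by
    simp only [MDP.unroll, dif_neg hx]
    exact Finset.mem_image_of_mem _ hμ
  exists_lift x hx μ _ q' _ :=
    ⟨(q', ⟨x.2 - 1, by omega⟩), rfl, by simp only; omega, by simp [SubProb.toLevel]⟩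

theorem exists_satL_unroll (M : MDP Q AP) {ψ : LiveF AP} (hψ : ψ.strict) {q : Q}
    (h : satL M ψ q) : ∃ k, satL (M.unroll q k) ψ (M.unroll q k).init := by
  obtain ⟨k, hk⟩ := (eventually_satLWithin M ψ hψ).exists
  exact ⟨k, (M.unrollCover q k).satL_of_satLWithin ψ k _ (Fin.val_last k).ge (hk q h)⟩

def SafeF.dual : SafeF AP → LiveF AP
  | .tt => .ff
  | .ff => .tt
  | .atom a => .natom a
  | .natom a => .atom a
  | .and φ ψ => .or φ.dual ψ.dual
  | .or φ ψ => .and φ.dual ψ.dual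
  | .pnextLt p h0 h1 ψ => .nnextLt p h0 h1 ψ
  | .pnextLe p h0 h1 ψ => .nnextLe p h0 h1 ψ
  | .puntilLt p h0 h1 ψ1 ψ2 => .nuntilLt p h0 h1 ψ1 ψ2
  | .puntilLe p h0 h1 ψ1 ψ2 => .nuntilLe p h0 h1 ψ1 ψ2

theorem SafeF.dual_strict : ∀ ψ : SafeF AP, ψ.weak → ψ.dual.strict
  | .tt, _ | .ff, _ | .atom _, _ | .natom _, _ => trivial
  | .and φ ψ, h | .or φ ψ, h => ⟨φ.dual_strict h.1, ψ.dual_strict h.2⟩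
  | .pnextLt _ _ _ _, h | .puntilLt _ _ _ _ _, h => h.elim
  | .pnextLe _ _ _ _, h | .puntilLe _ _ _ _ _, h => h

theorem not_satS_iff_satL_dual (M : MDP Q AP) :
    ∀ (ψ : SafeF AP) (q : Q), ¬ satS M ψ q ↔ satL M ψ.dual q
  | .tt, _ | .ff, _ | .atom _, _ | .natom _, _ => by simp [satS, SafeF.dual, satL]
  | .and φ ψ, q => by
    rw [satS, SafeF.dual, satL, not_and_or, not_satS_iff_satL_dual M φ q,
      not_satS_iff_satL_dual M ψ q]
  | .or φ ψ, q => by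
    rw [satS, SafeF.dual, satL, not_or, not_satS_iff_satL_dual M φ q,
      not_satS_iff_satL_dual M ψ q]
  | .pnextLt .., _ | .pnextLe .., _ | .puntilLt .., _ | .puntilLe .., _ => Iff.rfl

theorem isCanonSim_of_forall {M : MDP Q AP} {M' : MDP Q' AP} (R₁ : Q → Q' → Prop)
    (h : ∀ a b, R₁ a b → M.label a = M'.label b ∧ ∀ μ ∈ M.trans a, ∃ μ' ∈ M'.trans b,
      ∀ (A : Set Q) (B : Set Q'), (∀ a ∈ A, ∀ b, R₁ a b → b ∈ B) → μ.mass A ≤ μ'.mass B) :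
    IsCanonSim M M' R₁ := by
  refine ⟨fun x => ?_, fun x y z hxy hyz => ?_, ?_⟩
  · cases x <;> rfl
  · cases x <;> cases y <;> cases z <;> simp_all [canonRel]
  · rintro (a | b) (a' | b') hR
    · obtain rfl : a = a' := hR
      exact ⟨rfl, fun μ hμ => ⟨μ, hμ, fun _ _ => le_rfl⟩⟩
    · obtain ⟨hlabel, htrans⟩ := h a b' hR
      refine ⟨hlabel, fun μ hμ => ?_⟩
      obtain ⟨ν, hν, rfl⟩ := Finset.mem_image.1 hμ
      obtain ⟨ν', hν', hle⟩ := htrans ν hν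
      refine ⟨ν'.toRight, Finset.mem_image_of_mem _ hν', fun A hA => ?_⟩
      rw [SubProb.mass_toLeft, SubProb.mass_toRight]
      exact hle _ _ fun a ha b hab => hA ▸ ⟨Sum.inl a, ha, hab⟩
    · exact hR.elim
    · obtain rfl : b = b' := hR
      exact ⟨rfl, fun μ hμ => ⟨μ, hμ, fun _ _ => le_rfl⟩⟩

/-- Paths from `r` along `E`, listed backwards, so that extending a path is `cons` and its
parent is its `tail`. -/
inductive IsRevPath {V : Type*} (E : V → V → Prop) (r : V) : List V → Prop
  | root : IsRevPath E r [r]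
  | cons {a b : V} {l : List V} : IsRevPath E r (a :: l) → E a b → IsRevPath E r (b :: a :: l)

namespace IsRevPath

variable {V : Type*} {E : V → V → Prop} {r : V} {l : List V}

theorem ne_nil (h : IsRevPath E r l) : l ≠ [] := by
  cases h <;> simp

theorem extend (h : IsRevPath E r l) {b : V} (hE : E (l.head h.ne_nil) b) :
    IsRevPath E r (b :: l) := by
  cases h with
  | root => exact .cons .root hE
  | cons h' e => exact .cons (.cons h' e) hE

theorem tail (h : IsRevPath E r l) (hl : l.tail ≠ []) :
    IsRevPath E r l.tail ∧ E (l.tail.head hl) (l.head h.ne_nil) := by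
  cases h with
  | root => exact absurd rfl hl
  | cons h' e => exact ⟨h', e⟩

theorem eq_singleton_of_tail_eq_nil (h : IsRevPath E r l) (hl : l.tail = []) : l = [r] := by
  cases h with
  | root => rfl
  | cons _ _ => simp at hl

end IsRevPath

/-- States of `M` are encoded in `Fin (card Q)` so that the tree of paths is a `Type`. -/
abbrev TreeState (M : MDP Q AP) (r : Q) (k : ℕ) : Type :=
  {l : List (Fin (Fintype.card Q)) //
    IsRevPath (fun a b => M.edge ((Fintype.equivFin Q).symm a) ((Fintype.equivFin Q).symm b))
      (Fintype.equivFin Q r) l ∧ l.length ≤ k + 1}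

instance (M : MDP Q AP) (r : Q) (k : ℕ) : Finite (TreeState M r k) :=
  have := (List.finite_length_le (Fin (Fintype.card Q)) (k + 1)).to_subtype
  Finite.of_injective (β := {l : List (Fin (Fintype.card Q)) | l.length ≤ k + 1})
    (fun x => ⟨x.1, x.2.2⟩) fun _ _ h => Subtype.ext (Subtype.mk.inj h)

instance (M : MDP Q AP) (r : Q) (k : ℕ) : Fintype (TreeState M r k) :=
  Fintype.ofFinite _

namespace TreeState

variable {M : MDP Q AP} {r : Q} {k : ℕ}

def endpoint (x : TreeState M r k) : Q :=
  (Fintype.equivFin Q).symm (x.1.head x.2.1.ne_nil)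

def height (x : TreeState M r k) : ℕ :=
  k + 1 - x.1.length

theorem ext_of_tail_eq_of_endpoint_eq {x y : TreeState M r k} (ht : x.1.tail = y.1.tail)
    (he : x.endpoint = y.endpoint) : x = y := by
  apply Subtype.ext
  rw [← List.cons_head_tail x.2.1.ne_nil, ← List.cons_head_tail y.2.1.ne_nil, ht,
    (Fintype.equivFin Q).symm.injective he]

def pushVal (x : TreeState M r k) (μ : SubProb Q) (y : TreeState M r k) : ℝ :=
  if y.1.tail = x.1 then μ.val y.endpoint else 0

theorem tail_eq_of_pushVal_ne_zero {x y : TreeState M r k} {μ : SubProb Q}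
    (h : x.pushVal μ y ≠ 0) : y.1.tail = x.1 := by
  by_contra h'
  exact h (if_neg h')

theorem sum_indicator_pushVal_le (x : TreeState M r k) (μ : SubProb Q)
    {A : Set (TreeState M r k)} {B : Set Q} (hAB : ∀ y ∈ A, y.endpoint ∈ B) :
    ∑ y, A.indicator (x.pushVal μ) y ≤ ∑ q, B.indicator μ.val q := by
  refine sum_le_sum_of_injOn_support (Set.indicator_nonneg fun q _ => μ.nonneg q) endpoint
    (fun y hy y' hy' he => ?_) fun y hy => ?_
  · rw [Function.mem_support, Set.indicator_apply_ne_zero] at hy hy'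
    exact ext_of_tail_eq_of_endpoint_eq
      ((tail_eq_of_pushVal_ne_zero hy.2).trans (tail_eq_of_pushVal_ne_zero hy'.2).symm) he
  · rw [Set.indicator_apply_ne_zero] at hy
    rw [Set.indicator_of_mem hy.1, Set.indicator_of_mem (hAB y hy.1), pushVal,
      if_pos (tail_eq_of_pushVal_ne_zero hy.2)]

def push (x : TreeState M r k) (μ : SubProb Q) : SubProb (TreeState M r k) where
  val := x.pushVal μ
  nonneg y := by
    unfold pushVal
    split_ifs
    exacts [μ.nonneg _, le_rfl]
  sum_le_one := by
    simpa only [Set.indicator_univ] using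
      (x.sum_indicator_pushVal_le μ (A := .univ) (B := .univ) fun _ _ => trivial).trans
        (by simpa only [Set.indicator_univ] using μ.sum_le_one)

theorem mass_push_le (x : TreeState M r k) (μ : SubProb Q) {A : Set (TreeState M r k)}
    {B : Set Q} (hAB : ∀ y ∈ A, y.endpoint ∈ B) : (x.push μ).mass A ≤ μ.mass B :=
  x.sum_indicator_pushVal_le μ hAB

end TreeState

open TreeState

def treeMDP (M : MDP Q AP) (r : Q) (k : ℕ) : MDP (TreeState M r k) AP where
  init := ⟨[Fintype.equivFin Q r], .root, by simp⟩
  trans x := if x.height = 0 then {SubProb.zero _} else (M.trans x.endpoint).image x.push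
  trans_nonempty x := by
    split_ifs
    · exact Finset.singleton_nonempty _
    · exact (M.trans_nonempty _).image _
  label x := M.label x.endpoint

section Tree

variable {M : MDP Q AP} {r : Q} {k : ℕ}

theorem treeMDP_trans_of_height_ne_zero {x : TreeState M r k} (hx : x.height ≠ 0) :
    (treeMDP M r k).trans x = (M.trans x.endpoint).image x.push :=
  if_neg hx

theorem treeMDP_trans_of_height_eq_zero {x : TreeState M r k} (hx : x.height = 0) :
    (treeMDP M r k).trans x = {SubProb.zero _} :=
  if_pos hx

theorem endpoint_treeMDP_init : (treeMDP M r k).init.endpoint = r :=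
  (Fintype.equivFin Q).symm_apply_apply r

theorem height_treeMDP_init : (treeMDP M r k).init.height = k := by
  simp [height, treeMDP]

theorem treeMDP_edge_iff {x y : TreeState M r k} : (treeMDP M r k).edge x y ↔ y.1.tail = x.1 := by
  constructor
  · rintro ⟨μ, hμ, hpos⟩
    by_cases hx : x.height = 0
    · rw [treeMDP_trans_of_height_eq_zero hx, Finset.mem_singleton] at hμ
      subst hμ
      exact absurd hpos (lt_irrefl 0)
    · obtain ⟨ν, -, rfl⟩ := Finset.mem_image.1 (treeMDP_trans_of_height_ne_zero hx ▸ hμ)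
      exact tail_eq_of_pushVal_ne_zero hpos.ne'
  · intro h
    obtain ⟨l, hl⟩ := x
    subst h
    obtain ⟨-, ν, hν, hpos⟩ := y.2.1.tail hl.1.ne_nil
    have hx : height ⟨y.1.tail, hl⟩ ≠ 0 := by
      have := y.2.2
      simp only [height, List.length_tail]
      omega
    refine ⟨push ⟨y.1.tail, hl⟩ ν, ?_, ?_⟩
    · rw [treeMDP_trans_of_height_ne_zero hx]
      exact Finset.mem_image_of_mem _ hν
    · show 0 < pushVal _ ν y
      rwa [pushVal, if_pos rfl]

theorem isTreeGraph_treeMDP : IsTreeGraph (treeMDP M r k).edge (treeMDP M r k).init := by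
  refine ⟨fun x hx => x.2.1.ne_nil (treeMDP_edge_iff.1 hx).symm, fun y hy => ?_, fun y => ?_⟩
  · have ht : y.1.tail ≠ [] := fun ht => hy (Subtype.ext (y.2.1.eq_singleton_of_tail_eq_nil ht))
    refine ⟨⟨y.1.tail, (y.2.1.tail ht).1, ?_⟩, treeMDP_edge_iff.2 rfl,
      fun p hp => Subtype.ext (treeMDP_edge_iff.1 hp).symm⟩
    simpa using y.2.2.trans (Nat.le_succ _)
  · obtain ⟨l, hl, hlen⟩ := y
    induction hl with
    | root => exact .refl
    | cons _ _ ih =>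
      exact .tail (ih (by simp only [List.length_cons] at hlen ⊢; omega)) (treeMDP_edge_iff.2 rfl)

end Tree

def treeCover (M : MDP Q AP) (r : Q) (k : ℕ) : LevelCover (treeMDP M r k) M where
  proj := endpoint
  lvl := height
  label_eq _ := rfl
  lift x μ := x.push μ
  lift_mem x hx μ hμ := by
    rw [treeMDP_trans_of_height_ne_zero hx]
    exact Finset.mem_image_of_mem _ hμ
  exists_lift x hx μ hμ q hq := by
    have hE : M.edge x.endpoint q := ⟨μ, hμ, lt_of_le_of_ne (μ.nonneg q) (Ne.symm hq)⟩
    let y : TreeState M r k := ⟨Fintype.equivFin Q q :: x.1,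
      x.2.1.extend (show M.edge x.endpoint ((Fintype.equivFin Q).symm (Fintype.equivFin Q q)) by
        rwa [Equiv.symm_apply_apply]),
      by simp only [height] at hx; simp only [List.length_cons]; omega⟩
    refine ⟨y, (Fintype.equivFin Q).symm_apply_apply q, ?_, ?_⟩
    · simp only [y, height, List.length_cons]
      omega
    · show μ.val q ≤ pushVal x μ y
      rw [pushVal, if_pos (show y.1.tail = x.1 from rfl)]
      exact le_of_eq (congrArg μ.val ((Fintype.equivFin Q).symm_apply_apply q).symm)

theorem treeMDP_sim (M : MDP Q AP) (k : ℕ) : (treeMDP M M.init k).Sim M := by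
  refine ⟨_, isCanonSim_of_forall (fun (x : TreeState M M.init k) q => x.endpoint = q) ?_,
    (endpoint_treeMDP_init : (treeMDP M M.init k).init.endpoint = M.init)⟩
  rintro x _ rfl
  refine ⟨rfl, fun μ hμ => ?_⟩
  by_cases hx : x.height = 0
  · rw [treeMDP_trans_of_height_eq_zero hx, Finset.mem_singleton] at hμ
    obtain ⟨ν, hν⟩ := M.trans_nonempty x.endpoint
    exact ⟨ν, hν, fun A B _ => hμ ▸ (SubProb.mass_zero A).trans_le (ν.mass_nonneg B)⟩
  · rw [treeMDP_trans_of_height_ne_zero hx] at hμ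
    obtain ⟨ν, hν, rfl⟩ := Finset.mem_image.1 hμ
    exact ⟨ν, hν, fun A B hAB => x.mass_push_le ν fun y hy => hAB y hy _ rfl⟩

theorem exists_not_satS_treeMDP (M : MDP Q AP) {ψ : SafeF AP} (hψ : ψ.weak)
    (h : ¬ satS M ψ M.init) : ∃ k, ¬ satS (treeMDP M M.init k) ψ (treeMDP M M.init k).init := by
  obtain ⟨k, hk⟩ := (eventually_satLWithin M ψ.dual (ψ.dual_strict hψ)).exists
  rw [not_satS_iff_satL_dual] at h
  refine ⟨k, (not_satS_iff_satL_dual _ ψ _).2 <|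
    (treeCover M M.init k).satL_of_satLWithin _ k _ height_treeMDP_init.ge ?_⟩
  show satLWithin M ψ.dual k (treeMDP M M.init k).init.endpoint
  rw [endpoint_treeMDP_init]
  exact hk _ h

/-- (a) If a state `q` of an MDP satisfies a strict liveness formula, then some finite
unrolling of the MDP rooted at `q` satisfies it. (b) Consequently, if a weak safety formula
is violated by an MDP `M`, there is an MDP `M'` whose underlying unlabeled graph is a tree
with `M' ≼ M` and `M'` violating the formula. -/
theorem stmt13 {Q : Type u} {AP : Type w} [Fintype Q] (M : MDP Q AP) :
    (∀ psiSL : LiveF AP, psiSL.strict → ∀ q : Q, satL M psiSL q →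
      ∃ k : ℕ, satL (M.unroll q k) psiSL (M.unroll q k).init) ∧
    (∀ psiWS : SafeF AP, psiWS.weak → ¬ satS M psiWS M.init →
      ∃ (Q' : Type) (i : Fintype Q') (M' : @MDP Q' i AP),
        IsTreeGraph (@MDP.edge Q' AP i M') M'.init ∧
        @MDP.Sim Q' Q AP i _ M' M ∧
        ¬ @satS Q' AP i M' psiWS M'.init) := by
  refine ⟨fun _ hψ _ h => exists_satL_unroll M hψ h, fun _ hψ h => ?_⟩
  obtain ⟨k, hk⟩ := exists_not_satS_treeMDP M hψ h
  exact ⟨_, _, treeMDP M M.init k, isTreeGraph_treeMDP, treeMDP_sim M k, hk⟩
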